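/- arXiv:1611.06664 — 4 statements merged into one kernel-verified Lean document; each statement's English description precedes it below -/
import Mathlib

section
/- Let f be an observable lying in a k-dimensional Koopman-invariant subspace spanned by eigenfunctions φ₁,…,φ_k with distinct eigenvalues λ₁,…,λ_k, and suppose f = ∑_j c_j φ_j with all c_j ≠ 0. Then for any point z with φ_j(z) ≠ 0 for all j, the vectors v_n = (f(z), f(Tz), …, f(T^{k−1}z)) shifted n times, i.e., columns (f(Tⁿz), …, f(T^{n+k−1}z)) for n = 0,…,k−1, form a k×k Hankel matrix that is invertible (its determinant involves a Vandermonde determinant in λ₁,…,λ_k). -/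
open Finset

/-- The k×k Hankel matrix of an observable spanned by k eigenfunctions with distinct
eigenvalues and nonvanishing coefficients is invertible (Vandermonde argument). -/
theorem hankel_matrix_invertible {X : Type*} (T : X → X) (k : ℕ)
    (φ : Fin k → X → ℂ) (lam : Fin k → ℂ) (c : Fin k → ℂ) (f : X → ℂ)
    (hphi : ∀ j x, φ j (T x) = lam j * φ j x)
    (hf : ∀ x, f x = ∑ j, c j * φ j x)
    (hdist : Function.Injective lam)
    (z : X) (hnz : ∀ j, c j * φ j z ≠ 0) :
    (Matrix.of fun i n : Fin k => f (T^[(i : ℕ) + (n : ℕ)] z)).det ≠ 0 := by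
  have hiter : ∀ (j : Fin k) (m : ℕ), φ j (T^[m] z) = lam j ^ m * φ j z := by
    intro j m
    induction m with
    | zero => simp
    | succ n ih =>
      rw [Function.iterate_succ_apply', hphi, ih, pow_succ]
      ring
  have hH : (Matrix.of fun i n : Fin k => f (T^[(i : ℕ) + (n : ℕ)] z)) =
      (Matrix.vandermonde lam).transpose *
        (Matrix.diagonal (fun j => c j * φ j z) * Matrix.vandermonde lam) := by
    ext i n
    simp [Matrix.mul_apply, Matrix.diagonal_mul, Matrix.vandermonde, hf, hiter, pow_add]
    apply Finset.sum_congr rfl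
    intro j _
    rw [Finset.mul_sum, Finset.sum_eq_single j]
    · simp [Matrix.diagonal]; ring
    · intro b _ hb; simp [Matrix.diagonal_apply_ne' _ hb]
    · simp
  rw [hH, Matrix.det_mul, Matrix.det_mul, Matrix.det_transpose, Matrix.det_diagonal]
  have hV : (Matrix.vandermonde lam).det ≠ 0 :=
    Matrix.det_vandermonde_ne_zero_iff.mpr hdist
  exact mul_ne_zero hV (mul_ne_zero (Finset.prod_ne_zero_iff.mpr fun j _ => hnz j) hV)
end

section
/- With the hypotheses of the previous statement (f = ∑_{j=1}^k c_j φ_j, distinct unit-modulus eigenvalues λ_j, c_jφ_j(z) ≠ 0), the shift relation holds exactly: if X and Y are the k×k Hankel matrices with entries X_{i,n} = f(T^{i+n}z) and Y_{i,n} = f(T^{i+n+1}z), then A = Y X^{−1} is a k×k matrix whose eigenvalues are exactly λ₁,…,λ_k. -/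
open Finset

/-- Hankel-DMD exactness: the eigenvalues of `A = Y X⁻¹`, where `X` and `Y` are the k×k
Hankel matrix and its time shift, are exactly the Koopman eigenvalues λ₁,…,λ_k. -/
theorem hankel_dmd_spectrum {Z : Type*} (T : Z → Z) (k : ℕ)
    (φ : Fin k → Z → ℂ) (lam : Fin k → ℂ) (c : Fin k → ℂ) (f : Z → ℂ)
    (hphi : ∀ j x, φ j (T x) = lam j * φ j x)
    (hf : ∀ x, f x = ∑ j, c j * φ j x)
    (hdist : Function.Injective lam) (hmod : ∀ j, ‖lam j‖ = 1)
    (z : Z) (hnz : ∀ j, c j * φ j z ≠ 0)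
    (X Y : Matrix (Fin k) (Fin k) ℂ)
    (hX : ∀ i n : Fin k, X i n = f (T^[(i : ℕ) + (n : ℕ)] z))
    (hY : ∀ i n : Fin k, Y i n = f (T^[(i : ℕ) + (n : ℕ) + 1] z)) :
    spectrum ℂ (Y * X⁻¹) = Set.range lam := by
  classical
  -- iterate formula
  have hiter : ∀ (j : Fin k) (m : ℕ), φ j (T^[m] z) = lam j ^ m * φ j z := by
    intro j m
    induction m with
    | zero => simp
    | succ m ih =>
      rw [Function.iterate_succ_apply', hphi, ih, pow_succ]
      ring
  set g : Fin k → ℂ := fun j => c j * φ j z with hg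
  set V : Matrix (Fin k) (Fin k) ℂ := Matrix.transpose (Matrix.vandermonde lam) with hV
  set W : Matrix (Fin k) (Fin k) ℂ :=
    Matrix.diagonal g * Matrix.vandermonde lam with hW
  set D : Matrix (Fin k) (Fin k) ℂ := Matrix.diagonal lam with hD
  have hWe : ∀ j n : Fin k, W j n = g j * lam j ^ (n : ℕ) := by
    intro j n
    simp [hW, Matrix.diagonal_mul, Matrix.vandermonde]
  have hfm : ∀ m : ℕ, f (T^[m] z) = ∑ j, g j * lam j ^ m := by
    intro m
    rw [hf]
    refine Finset.sum_congr rfl fun j _ => ?_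
    rw [hiter]; simp [hg]; ring
  have hXeq : X = V * W := by
    ext i n
    rw [hX, Matrix.mul_apply, hfm]
    refine Finset.sum_congr rfl fun j _ => ?_
    rw [hWe]
    simp [hV, Matrix.vandermonde, pow_add]
    ring
  have hYeq : Y = V * (D * W) := by
    ext i n
    rw [hY, Matrix.mul_apply, hfm]
    refine Finset.sum_congr rfl fun j _ => ?_
    rw [Matrix.mul_apply]
    simp only [hD, Matrix.diagonal_apply, hV, Matrix.transpose_apply, Matrix.vandermonde]
    rw [Finset.sum_eq_single j]
    · rw [hWe]; simp [pow_add, pow_succ]; ring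
    · intro b _ hb
      rw [if_neg (fun h => hb h.symm), zero_mul]
    · intro h; exact absurd (Finset.mem_univ j) h
  have hdetV : IsUnit V.det := by
    rw [hV, Matrix.det_transpose]
    exact isUnit_iff_ne_zero.mpr
      (Matrix.det_vandermonde_ne_zero_iff.mpr hdist)
  have hdetW : IsUnit W.det := by
    rw [hW, Matrix.det_mul, Matrix.det_diagonal]
    exact ((isUnit_iff_ne_zero.mpr (Finset.prod_ne_zero_iff.mpr fun j _ => hnz j)).mul
      (isUnit_iff_ne_zero.mpr (Matrix.det_vandermonde_ne_zero_iff.mpr hdist)))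
  have hconj : Y * X⁻¹ = V * D * V⁻¹ := by
    rw [hXeq, hYeq, Matrix.mul_inv_rev]
    have : V * (D * W) * (W⁻¹ * V⁻¹) = V * D * (W * W⁻¹) * V⁻¹ := by
      noncomm_ring
    rw [this, Matrix.mul_nonsing_inv _ hdetW, Matrix.mul_one]
  rw [hconj]
  have : (V * D * V⁻¹) = (V.nonsingInvUnit hdetV : Matrix (Fin k) (Fin k) ℂ) * D *
      (↑(V.nonsingInvUnit hdetV)⁻¹ : Matrix (Fin k) (Fin k) ℂ) := rfl
  rw [this, spectrum.units_conjugate, hD, spectrum_diagonal]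
end

section
/- Let A be a complex m×n matrix with singular value decomposition A = W S V*, and define = W* B V S⁻¹ for B = A' where A' is such that A' = C A for some matrix C (truncating to nonzero singular values). If (λ, w) is an eigenpair of Â, then (λ, Ww) satisfies C(Ww) = λ(Ww) + r with W*r = 0; in particular if the column space of A is C-invariant then λ is an eigenvalue of C restricted to that column space with eigenvector Ww. -/
/-- Exactness of SVD-based DMD: eigenpairs `(λ, w)` of `Â = Wᴴ Y V S⁻¹` (with `A = W S Vᴴ`,
`Y = C A`) give `C (W w) = λ (W w) + r` with `Wᴴ r = 0`; if moreover the column space of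
`A` is `C`-invariant (`C W = W M` for some `M`), the residual vanishes so `(λ, W w)` is an
eigenpair of `C`. -/
theorem exact_dmd_residual {m' n' k : ℕ}
    (W : Matrix (Fin m') (Fin k) ℂ) (S : Matrix (Fin k) (Fin k) ℂ)
    (V : Matrix (Fin n') (Fin k) ℂ) (C : Matrix (Fin m') (Fin m') ℂ)
    (hWo : W.conjTranspose * W = 1) (hVo : V.conjTranspose * V = 1)
    (hS : IsUnit S.det)
    (A Y Ahat : Matrix _ _ ℂ)
    (hA : A = W * S * V.conjTranspose) (hY : Y = C * A)
    (hAhat : Ahat = W.conjTranspose * Y * V * S⁻¹)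
    (lam : ℂ) (w : Fin k → ℂ) (hw : Ahat.mulVec w = lam • w) :
    (∃ r : Fin m' → ℂ,
        C.mulVec (W.mulVec w) = lam • W.mulVec w + r ∧ W.conjTranspose.mulVec r = 0) ∧
    ((∃ M : Matrix (Fin k) (Fin k) ℂ, C * W = W * M) →
        C.mulVec (W.mulVec w) = lam • W.mulVec w) := by
  have hSS : S * S⁻¹ = 1 := Matrix.mul_nonsing_inv S hS
  have hA' : Ahat = W.conjTranspose * C * W := by
    rw [hAhat, hY, hA]
    calc W.conjTranspose * (C * (W * S * V.conjTranspose)) * V * S⁻¹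
        = W.conjTranspose * C * W * (S * (V.conjTranspose * V) * S⁻¹) := by
          simp only [Matrix.mul_assoc]
      _ = W.conjTranspose * C * W := by rw [hVo, Matrix.mul_one, hSS, Matrix.mul_one]
  have key : W.conjTranspose.mulVec (C.mulVec (W.mulVec w)) = lam • w := by
    rw [Matrix.mulVec_mulVec, Matrix.mulVec_mulVec, ← hA', hw]
  refine ⟨⟨C.mulVec (W.mulVec w) - lam • W.mulVec w, by ring_nf, ?_⟩, ?_⟩
  · rw [Matrix.mulVec_sub, key, Matrix.mulVec_smul, Matrix.mulVec_mulVec, hWo,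
      Matrix.one_mulVec, sub_self]
  · rintro ⟨M, hM⟩
    have hAM : Ahat = M := by
      rw [hA', Matrix.mul_assoc, hM, ← Matrix.mul_assoc, hWo, Matrix.one_mul]
    calc C.mulVec (W.mulVec w) = (C * W).mulVec w := by rw [Matrix.mulVec_mulVec]
      _ = W.mulVec (M.mulVec w) := by rw [hM, Matrix.mulVec_mulVec]
      _ = lam • W.mulVec w := by rw [← hAM, hw, Matrix.mulVec_smul]
end

section
/- For a sequence (f(Tⁱz))_{i≥0} generated by f = ∑_{j=1}^{k} c_j φ_j with φ_j Koopman eigenfunctions of distinct eigenvalues and c_jφ_j(z) ≠ 0, every Hankel matrix built from this sequence with at least k rows and at least k columns has rank exactly k. -/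
open Finset

/-- Every Hankel matrix with at least k rows and k columns built from a trajectory of an
observable lying in a k-dimensional span of eigenfunctions (distinct eigenvalues,
nonvanishing coefficients) has rank exactly k. -/
theorem hankel_matrix_rank {X : Type*} (T : X → X) (k m N : ℕ)
    (hm : k ≤ m) (hN : k ≤ N)
    (φ : Fin k → X → ℂ) (lam : Fin k → ℂ) (c : Fin k → ℂ) (f : X → ℂ)
    (hphi : ∀ j x, φ j (T x) = lam j * φ j x)
    (hf : ∀ x, f x = ∑ j, c j * φ j x)
    (hdist : Function.Injective lam)
    (z : X) (hnz : ∀ j, c j * φ j z ≠ 0) :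
    (Matrix.of fun (i : Fin m) (n : Fin N) => f (T^[(i : ℕ) + (n : ℕ)] z)).rank = k := by
  set H : Matrix (Fin m) (Fin N) ℂ :=
    Matrix.of fun (i : Fin m) (n : Fin N) => f (T^[(i : ℕ) + (n : ℕ)] z) with hH
  -- iterate formula
  have hiter : ∀ (j : Fin k) (t : ℕ), φ j (T^[t] z) = lam j ^ t * φ j z := by
    intro j t
    induction t with
    | zero => simp
    | succ t ih => rw [Function.iterate_succ_apply', hphi, ih, pow_succ]; ring
  have hentry : ∀ (i : Fin m) (n : Fin N),
      H i n = ∑ j, (lam j ^ (i : ℕ)) * (c j * φ j z * lam j ^ (n : ℕ)) := by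
    intro i n
    simp only [hH, Matrix.of_apply, hf]
    refine Finset.sum_congr rfl fun j _ => ?_
    rw [hiter, pow_add]; ring
  -- factorization H = A * B
  set A : Matrix (Fin m) (Fin k) ℂ := Matrix.of fun i j => lam j ^ (i : ℕ) with hA
  set B : Matrix (Fin k) (Fin N) ℂ :=
    Matrix.of fun j n => c j * φ j z * lam j ^ (n : ℕ) with hB
  have hfac : H = A * B := by
    ext i n
    rw [hentry, Matrix.mul_apply]
    rfl
  -- upper bound
  have hub : H.rank ≤ k := by
    calc H.rank ≤ B.rank := by rw [hfac]; exact Matrix.rank_mul_le_right A B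
    _ ≤ Fintype.card (Fin k) := Matrix.rank_le_card_height B
    _ = k := Fintype.card_fin k
  -- the leading k × k submatrix
  set S : Matrix (Fin k) (Fin k) ℂ := H.submatrix (Fin.castLE hm) (Fin.castLE hN) with hS
  have hSfac : S = (A.submatrix (Fin.castLE hm) id) * (B.submatrix id (Fin.castLE hN)) := by
    ext i n
    rw [hS, Matrix.submatrix_apply, hentry, Matrix.mul_apply]
    rfl
  have hvdet : (Matrix.vandermonde lam).det ≠ 0 := by
    rw [Matrix.det_vandermonde_ne_zero_iff]; exact hdist
  have hdetA : (A.submatrix (Fin.castLE hm) id).det ≠ 0 := by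
    have : A.submatrix (Fin.castLE hm) id = (Matrix.vandermonde lam).transpose := by
      ext i j; simp [hA, Matrix.vandermonde]
    rw [this, Matrix.det_transpose]; exact hvdet
  have hdetB : (B.submatrix id (Fin.castLE hN)).det ≠ 0 := by
    have : B.submatrix id (Fin.castLE hN) =
        Matrix.of fun j n => (c j * φ j z) * Matrix.vandermonde lam j n := by
      ext j n; simp [hB, Matrix.vandermonde]
    rw [this]
    rw [show (Matrix.of fun j n => (c j * φ j z) * Matrix.vandermonde lam j n).det
        = (∏ j, (c j * φ j z)) * (Matrix.vandermonde lam).det from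
      Matrix.det_mul_column (fun j => c j * φ j z) (Matrix.vandermonde lam)]
    exact mul_ne_zero (Finset.prod_ne_zero_iff.2 fun j _ => hnz j) hvdet
  have hdetS : IsUnit S.det := by
    rw [hSfac, Matrix.det_mul]
    exact (mul_ne_zero hdetA hdetB).isUnit
  have hSrank : S.rank = k := by
    rw [Matrix.rank_of_isUnit S ((Matrix.isUnit_iff_isUnit_det S).2 hdetS), Fintype.card_fin]
  -- lower bound : S = P * H * Q
  have hlb : k ≤ H.rank := by
    have hPHQ : S = ((1 : Matrix (Fin m) (Fin m) ℂ).submatrix (Fin.castLE hm) (Equiv.refl (Fin m)))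
        * (H * ((1 : Matrix (Fin N) (Fin N) ℂ).submatrix (Equiv.refl (Fin N)) (Fin.castLE hN))) := by
      rw [Matrix.one_submatrix_mul, Matrix.mul_submatrix_one]
      simp [hS]
    calc k = S.rank := hSrank.symm
    _ ≤ (H * ((1 : Matrix (Fin N) (Fin N) ℂ).submatrix (Equiv.refl (Fin N)) (Fin.castLE hN))).rank := by
        rw [hPHQ]; exact Matrix.rank_mul_le_right _ _
    _ ≤ H.rank := Matrix.rank_mul_le_left _ _
  exact le_antisymm hub hlb
end
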